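/- Let μ₁₂, μ₂₁ ≥ 0, a₁ ≥ 0 and c ≥ 0 be reals, set a₂ = a₁ + c, and let Q be the 2×2 real matrix Q = [[−μ₁₂ − a₁, μ₁₂], [μ₂₁, −μ₂₁ − a₂]]. Let π = (π₁, π₂) be a probability vector (π₁, π₂ ≥ 0, π₁ + π₂ = 1), define y(t) = π ·ᵥ exp(t·Q), s(t) = y₁(t) + y₂(t), and Π(t) = y₂(t)/s(t). Then for every t ≥ 0 one has s(t) > 0 and Π is differentiable at t with dΠ/dt = μ₁₂ · (1 − Π(t)) − μ₂₁ · Π(t) − c · Π(t) · (1 − Π(t)). (This is the inter-event Riccati flow of the posterior probability Π²_t of the high season in the SIS model of Corollary 2, where c = SF · θ₁ · (N − I_{τ_k})(I_{τ_k} + η)/N is the excess total intensity of the high season over the low season; for symmetric transition rates μ₁₂ = μ₂₁ = μ₂₁ the drift term reduces to (1 − 2Π)μ₂₁ as printed in the paper.) -/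

import Mathlib

open Matrix NormedSpace
open scoped Nat

private lemma pow_entry_nonneg {M : Matrix (Fin 2) (Fin 2) ℝ} (h : ∀ i j, 0 ≤ M i j) :
    ∀ (n : ℕ) (i j : Fin 2), 0 ≤ (M ^ n) i j := by
  intro n
  induction n with
  | zero =>
    intro i j
    rw [pow_zero]
    by_cases hij : i = j <;> simp [Matrix.one_apply, hij]
  | succ n ih =>
    intro i j
    rw [pow_succ, Matrix.mul_apply]
    exact Finset.sum_nonneg fun k _ => mul_nonneg (ih i k) (h k j)

private lemma exp_entry (M : Matrix (Fin 2) (Fin 2) ℝ) (i j : Fin 2) :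
    NormedSpace.exp M i j = ∑' n : ℕ, (n ! : ℝ)⁻¹ * (M ^ n) i j ∧
      Summable (fun n : ℕ => (n ! : ℝ)⁻¹ * (M ^ n) i j) := by
  letI : SeminormedRing (Matrix (Fin 2) (Fin 2) ℝ) := Matrix.linftyOpSemiNormedRing
  letI : NormedRing (Matrix (Fin 2) (Fin 2) ℝ) := Matrix.linftyOpNormedRing
  letI : NormedAlgebra ℝ (Matrix (Fin 2) (Fin 2) ℝ) := Matrix.linftyOpNormedAlgebra
  have hsum : Summable (fun n : ℕ => (n ! : ℝ)⁻¹ • M ^ n) :=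
    NormedSpace.expSeries_summable' M
  let L : Matrix (Fin 2) (Fin 2) ℝ →L[ℝ] ℝ :=
    ⟨⟨⟨fun N => N i j, fun _ _ => rfl⟩, fun _ _ => rfl⟩,
      (continuous_apply j).comp (continuous_apply i)⟩
  have hmap : ∀ n : ℕ, L ((n ! : ℝ)⁻¹ • M ^ n) = (n ! : ℝ)⁻¹ * (M ^ n) i j := fun n => rfl
  constructor
  · rw [NormedSpace.exp_eq_tsum ℝ]
    have := L.map_tsum hsum
    exact this
  · have := hsum.map L.toLinearMap.toAddMonoidHom L.continuous
    exact this

private lemma exp_entry_nonneg {M : Matrix (Fin 2) (Fin 2) ℝ} (h : ∀ i j, 0 ≤ M i j)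
    (i j : Fin 2) : 0 ≤ NormedSpace.exp M i j := by
  rw [(exp_entry M i j).1]
  exact tsum_nonneg fun n => mul_nonneg (by positivity) (pow_entry_nonneg h n i j)

private lemma exp_diag_ge_one {M : Matrix (Fin 2) (Fin 2) ℝ} (h : ∀ i j, 0 ≤ M i j)
    (i : Fin 2) : 1 ≤ NormedSpace.exp M i i := by
  rw [(exp_entry M i i).1]
  have h0 : ((0:ℕ)! : ℝ)⁻¹ * (M ^ 0) i i = 1 := by simp [Matrix.one_apply]
  calc (1:ℝ) = ((0:ℕ)! : ℝ)⁻¹ * (M ^ 0) i i := h0.symm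
    _ ≤ ∑' n : ℕ, (n ! : ℝ)⁻¹ * (M ^ n) i i :=
      Summable.le_tsum (exp_entry M i i).2 0
        (fun n _ => mul_nonneg (by positivity) (pow_entry_nonneg h n i i))

/-- The inter-event Riccati flow of the high-season posterior probability in the
two-regime SIS model: with `Q = [[−μ₁₂−a₁, μ₁₂],[μ₂₁, −μ₂₁−a₂]]`, `a₂ = a₁ + c`, the
normalizer `s(t) = Σᵢ (π·exp(tQ))ᵢ` is positive and `Π(t) = (π·exp(tQ))₂ / s(t)` solves
`Π' = μ₁₂(1−Π) − μ₂₁Π − cΠ(1−Π)` for `t ≥ 0`. -/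
theorem sis_riccati_flow (μ₁₂ μ₂₁ a₁ c : ℝ) (hμ₁₂ : 0 ≤ μ₁₂) (hμ₂₁ : 0 ≤ μ₂₁)
    (ha₁ : 0 ≤ a₁) (hc : 0 ≤ c)
    (π : Fin 2 → ℝ) (hπ : ∀ i, 0 ≤ π i) (hπsum : π 0 + π 1 = 1) :
    let a₂ := a₁ + c
    let Q : Matrix (Fin 2) (Fin 2) ℝ := !![-μ₁₂ - a₁, μ₁₂; μ₂₁, -μ₂₁ - a₂]
    let y : ℝ → Fin 2 → ℝ := fun t => π ᵥ* NormedSpace.exp (t • Q)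
    let s : ℝ → ℝ := fun t => y t 0 + y t 1
    let Pi : ℝ → ℝ := fun t => y t 1 / s t
    ∀ t : ℝ, 0 ≤ t → 0 < s t ∧
      HasDerivAt Pi (μ₁₂ * (1 - Pi t) - μ₂₁ * Pi t - c * Pi t * (1 - Pi t)) t := by
  intro a₂ Q y s Pi t ht
  letI : SeminormedRing (Matrix (Fin 2) (Fin 2) ℝ) := Matrix.linftyOpSemiNormedRing
  letI : NormedRing (Matrix (Fin 2) (Fin 2) ℝ) := Matrix.linftyOpNormedRing
  letI : NormedAlgebra ℝ (Matrix (Fin 2) (Fin 2) ℝ) := Matrix.linftyOpNormedAlgebra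
  -- positivity of s t
  set lam : ℝ := μ₁₂ + μ₂₁ + a₁ + a₂ with hlam
  set A : Matrix (Fin 2) (Fin 2) ℝ := Q + lam • 1 with hAdef
  have hAentries : ∀ i j, 0 ≤ (t • A) i j := by
    intro i j
    fin_cases i <;> fin_cases j <;>
      simp [hAdef, Q, Matrix.add_apply, Matrix.smul_apply, Matrix.one_apply, hlam,
        show a₂ = a₁ + c from rfl] <;>
      nlinarith [mul_nonneg ht hμ₁₂, mul_nonneg ht hμ₂₁, mul_nonneg ht ha₁, mul_nonneg ht hc]
  have hsplit : NormedSpace.exp (t • Q)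
      = Real.exp (-(lam * t)) • NormedSpace.exp (t • A) := by
    have hdecomp : t • Q = t • A + (-(lam * t)) • (1 : Matrix (Fin 2) (Fin 2) ℝ) := by
      rw [hAdef]; rw [smul_add, smul_smul]; module
    have hcomm : Commute (t • A) ((-(lam * t)) • (1 : Matrix (Fin 2) (Fin 2) ℝ)) :=
      (Commute.one_right (t • A)).smul_right _
    rw [hdecomp, Matrix.exp_add_of_commute _ _ hcomm]
    have h1 : ((-(lam * t)) • (1 : Matrix (Fin 2) (Fin 2) ℝ))
        = algebraMap ℝ (Matrix (Fin 2) (Fin 2) ℝ) (-(lam * t)) :=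
      (Algebra.algebraMap_eq_smul_one _).symm
    erw [h1, ← NormedSpace.algebraMap_exp_comm, ← Real.exp_eq_exp_ℝ,
      Algebra.algebraMap_eq_smul_one, mul_smul_comm, mul_one]
  have hEnn : ∀ i j, 0 ≤ NormedSpace.exp (t • A) i j := exp_entry_nonneg hAentries
  have hEdiag : ∀ i, 1 ≤ NormedSpace.exp (t • A) i i := exp_diag_ge_one hAentries
  have hy_eq : ∀ (u : ℝ) (i : Fin 2), y u i
      = π 0 * NormedSpace.exp (u • Q) 0 i + π 1 * NormedSpace.exp (u • Q) 1 i := by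
    intro u i
    simp [y, Matrix.vecMul, dotProduct, Fin.sum_univ_two]
  have hspos : 0 < s t := by
    have h0 : s t = y t 0 + y t 1 := rfl
    rw [h0, hy_eq t 0, hy_eq t 1, hsplit]
    simp only [Matrix.smul_apply, smul_eq_mul]
    nlinarith [Real.exp_pos (-(lam * t)), hπ 0, hπ 1, hEnn 0 1, hEnn 1 0,
      hEdiag 0, hEdiag 1, mul_le_mul_of_nonneg_left (hEdiag 0) (hπ 0),
      mul_le_mul_of_nonneg_left (hEdiag 1) (hπ 1),
      mul_nonneg (hπ 1) (hEnn 1 0), mul_nonneg (hπ 0) (hEnn 0 1)]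
  refine ⟨hspos, ?_⟩
  -- derivative of the matrix exponential and its entries
  have hE : HasDerivAt (fun u : ℝ => NormedSpace.exp (u • Q))
      (NormedSpace.exp (t • Q) * Q) t := hasDerivAt_exp_smul_const Q t
  have hEntry : ∀ i j : Fin 2, HasDerivAt (fun u : ℝ => NormedSpace.exp (u • Q) i j)
      ((NormedSpace.exp (t • Q) * Q) i j) t := by
    intro i j
    let L : Matrix (Fin 2) (Fin 2) ℝ →L[ℝ] ℝ :=
      ⟨⟨⟨fun N => N i j, fun _ _ => rfl⟩, fun _ _ => rfl⟩,
        (continuous_apply j).comp (continuous_apply i)⟩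
    exact (L.hasFDerivAt.comp_hasDerivAt t hE :)
  have hmul : ∀ j i : Fin 2, (NormedSpace.exp (t • Q) * Q) j i
      = NormedSpace.exp (t • Q) j 0 * Q 0 i + NormedSpace.exp (t • Q) j 1 * Q 1 i := by
    intro j i
    rw [Matrix.mul_apply, Fin.sum_univ_two]
  have hyd : ∀ i : Fin 2, HasDerivAt (fun u => y u i)
      (y t 0 * Q 0 i + y t 1 * Q 1 i) t := by
    intro i
    have h := ((hEntry 0 i).const_mul (π 0)).add ((hEntry 1 i).const_mul (π 1))
    have h2 := h.congr_of_eventuallyEq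
      (Filter.Eventually.of_forall fun u => (hy_eq u i))
    refine h2.congr_deriv (Eq.symm ?_)
    rw [hmul 0 i, hmul 1 i, hy_eq t 0, hy_eq t 1]
    ring
  have hQ00 : Q 0 0 = -μ₁₂ - a₁ := rfl
  have hQ01 : Q 0 1 = μ₁₂ := rfl
  have hQ10 : Q 1 0 = μ₂₁ := rfl
  have hQ11 : Q 1 1 = -μ₂₁ - a₂ := rfl
  have hs' : HasDerivAt s
      ((y t 0 * Q 0 0 + y t 1 * Q 1 0) + (y t 0 * Q 0 1 + y t 1 * Q 1 1)) t :=
    (hyd 0).add (hyd 1)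
  have hne : s t ≠ 0 := ne_of_gt hspos
  have hPi := (hyd 1).div hs' hne
  refine hPi.congr_deriv (Eq.symm ?_)
  have hPit : Pi t = y t 1 / s t := rfl
  have hst : s t = y t 0 + y t 1 := rfl
  have ha₂ : a₂ = a₁ + c := rfl
  rw [hPit, hQ00, hQ01, hQ10, hQ11, ha₂]
  rw [hst] at hne ⊢
  field_simp
  ring
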